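/- A Toeplitz operator T_φ on H² that is an orthogonal projection (T_φ = T_φ* = T_φ²) must be 0 or the identity I. -/

import Mathlib

open MeasureTheory Complex AddCircle
open scoped ENNReal ComplexConjugate InnerProductSpace

noncomputable section

namespace ToeplitzProj

instance : Fact (0 < 2 * Real.pi) := ⟨by positivity⟩
instance : Fact ((1:ℝ≥0∞) ≤ ⊤) := ⟨le_top⟩

abbrev 𝕋 : Type := AddCircle (2 * Real.pi)
abbrev μT : Measure 𝕋 := haarAddCircle
abbrev L2 : Type := Lp ℂ 2 μT
abbrev Linf : Type := Lp ℂ ⊤ μT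

/-- The rank-one operator `f ⊗ g`, acting by `h ↦ ⟨h, g⟩ f = ⟪g, h⟫ • f`. -/
def rankOne {H : Type*} [NormedAddCommGroup H] [InnerProductSpace ℂ H] (f g : H) :
    H →L[ℂ] H := (innerSL ℂ g).smulRight f

theorem memLp_conj (h : L2) : MemLp (fun x => conj ((h : 𝕋 → ℂ) x)) 2 μT :=
  ⟨RCLike.continuous_conj.comp_aestronglyMeasurable (Lp.memLp h).1,
    by
      rw [show (fun x => conj ((h : 𝕋 → ℂ) x)) = conj (h : 𝕋 → ℂ) from rfl, eLpNorm_conj]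
      exact (Lp.memLp h).2⟩

/-- Pointwise complex conjugation on `L²`. -/
def conjL2 (h : L2) : L2 := (memLp_conj h).toLp _

theorem memLp_mul (φ : Linf) (f : L2) :
    MemLp ((φ : 𝕋 → ℂ) • (f : 𝕋 → ℂ)) 2 μT :=
  (Lp.memLp f).smul (p := ⊤) (Lp.memLp φ)

/-- Multiplication by an `L^∞` function, as a bounded operator on `L²`. -/
def mulCLM (φ : Linf) : L2 →L[ℂ] L2 :=
  LinearMap.mkContinuous
    { toFun := fun f => (memLp_mul φ f).toLp _
      map_add' := by
        intro f g
        rw [← MemLp.toLp_add (memLp_mul φ f) (memLp_mul φ g)]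
        apply MemLp.toLp_congr
        filter_upwards [Lp.coeFn_add f g] with x hx
        simp only [Pi.smul_apply, smul_eq_mul, Pi.mul_apply, hx, Pi.add_apply, mul_add]
      map_smul' := by
        intro c f
        show (memLp_mul φ (c • f)).toLp _ = c • (memLp_mul φ f).toLp _
        rw [← MemLp.toLp_const_smul c (memLp_mul φ f)]
        apply MemLp.toLp_congr
        filter_upwards [Lp.coeFn_smul c f] with x hx
        simp only [Pi.smul_apply, smul_eq_mul, Pi.mul_apply, hx]
        ring }
    ‖φ‖
    (by
      intro f
      simp only [LinearMap.coe_mk, AddHom.coe_mk]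
      rw [Lp.norm_toLp]
      have h := eLpNorm_smul_le_mul_eLpNorm (p := ⊤) (q := 2) (r := 2) (Lp.memLp f).1 (Lp.memLp φ).1
      calc (eLpNorm ((φ : 𝕋 → ℂ) • (f : 𝕋 → ℂ)) 2 μT).toReal
          ≤ (eLpNorm (φ : 𝕋 → ℂ) ⊤ μT * eLpNorm (f : 𝕋 → ℂ) 2 μT).toReal := by
            exact ENNReal.toReal_mono (by
              exact ENNReal.mul_ne_top (Lp.memLp φ).2.ne (Lp.memLp f).2.ne) h
        _ = ‖φ‖ * ‖f‖ := by
            rw [ENNReal.toReal_mul, Lp.norm_def, Lp.norm_def])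

/-- The Hardy space `H²` as a subspace of `L²`: the functions whose negative Fourier
coefficients vanish. -/
def Hardy : Submodule ℂ L2 where
  carrier := {f : L2 | ∀ n : ℤ, n < 0 → ⟪(fourierLp 2 n : L2), f⟫_ℂ = 0}
  add_mem' := by
    intro a b ha hb n hn
    rw [inner_add_right, ha n hn, hb n hn, add_zero]
  zero_mem' := by
    intro n hn
    exact inner_zero_right _
  smul_mem' := by
    intro c a ha n hn
    rw [inner_smul_right, ha n hn, mul_zero]

theorem isClosed_Hardy : IsClosed (Hardy : Set L2) := by
  have : (Hardy : Set L2)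
      = ⋂ n : ℤ, ⋂ _ : n < 0, {f : L2 | ⟪(fourierLp 2 n : L2), f⟫_ℂ = 0} := by
    ext f
    simp only [Set.mem_iInter, Set.mem_setOf_eq, SetLike.mem_coe]
    exact Iff.rfl
  rw [this]
  exact isClosed_iInter fun n => isClosed_iInter fun _ =>
    isClosed_eq (Continuous.inner continuous_const continuous_id) continuous_const

instance : CompleteSpace Hardy := isClosed_Hardy.completeSpace_coe

/-- Inclusion of the Hardy space into `L²`. -/
def inclH : Hardy →L[ℂ] L2 := Hardy.subtypeL

/-- The Riesz projection `P : L² → H²`. -/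
def projH : L2 →L[ℂ] Hardy := Hardy.orthogonalProjectionOnto

/-- The Riesz projection, viewed as an operator `L² → L²`. -/
def PFull : L2 →L[ℂ] L2 := inclH ∘L projH

/-- The Toeplitz operator `T_φ f = P(φ f)` on the Hardy space. -/
def Toep (φ : Linf) : Hardy →L[ℂ] Hardy := projH ∘L mulCLM φ ∘L inclH

/-- The Hankel operator `H_φ f = (I − P)(φ f)`, mapping `H²` into `L²`. -/
def Hank (φ : Linf) : Hardy →L[ℂ] L2 := (mulCLM φ ∘L inclH) - (inclH ∘L Toep φ)

/-- A continuous map on the circle, as an element of `L^∞`. -/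
def cLinf (g : C(𝕋, ℂ)) : Linf := ContinuousMap.toLp (E := ℂ) ⊤ μT ℂ g

/-- The coordinate function `z = e^{ix}` in `L^∞`. -/
def zL : Linf := cLinf (fourier 1)

/-- The conjugate coordinate function `z̄ = e^{-ix}` in `L^∞`. -/
def zbarL : Linf := cLinf (fourier (-1))

/-- The constant function `c` in `L^∞`. -/
def constL (c : ℂ) : Linf := cLinf (ContinuousMap.const _ c)

/-- An `L^∞` function, viewed as an element of `L²` (the measure is finite). -/
def toL2 (φ : Linf) : L2 :=
  ((Lp.memLp φ).mono_exponent (le_top : (2:ℝ≥0∞) ≤ ⊤)).toLp φ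

/-- The constant function `1`, as an element of the Hardy space. -/
def oneH : Hardy :=
  ⟨(fourierLp 2 0 : L2), fun n hn => orthonormal_fourier.2 (show n ≠ 0 from hn.ne)⟩

/-- The anti-unitary operator `V` on `L²`, `(Vh)(w) = w̄ · conj (h w)`. -/
def Vop (h : L2) : L2 := mulCLM zbarL (conjL2 h)

/-- `φ ∈ L^∞` is an inner function: `φ ∈ H²` and `|φ| = 1` a.e. -/
def IsInnerFn (u : Linf) : Prop :=
  toL2 u ∈ Hardy ∧ ∀ᵐ x ∂μT, ‖(u : 𝕋 → ℂ) x‖ = 1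

/-- `φ ∈ L^∞` is nonconstant (as an a.e. class). -/
def Nonconst (u : Linf) : Prop := ¬ ∃ c : ℂ, (u : 𝕋 → ℂ) =ᵐ[μT] fun _ => c

/-- `Q` is an orthogonal projection: self-adjoint and idempotent. -/
def IsOrthoProj {H : Type*} [NormedAddCommGroup H] [InnerProductSpace ℂ H]
    [CompleteSpace H] (Q : H →L[ℂ] H) : Prop :=
  IsSelfAdjoint Q ∧ Q ∘L Q = Q

theorem memLinf_conj (φ : Linf) : MemLp (fun x => conj ((φ : 𝕋 → ℂ) x)) ⊤ μT :=
  ⟨RCLike.continuous_conj.comp_aestronglyMeasurable (Lp.memLp φ).1,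
    by
      rw [show (fun x => conj ((φ : 𝕋 → ℂ) x)) = conj (φ : 𝕋 → ℂ) from rfl, eLpNorm_conj]
      exact (Lp.memLp φ).2⟩

/-- Pointwise complex conjugation on `L^∞`. -/
def conjLinf (φ : Linf) : Linf := (memLinf_conj φ).toLp _

/-- The pointwise product of two `L^∞` functions. -/
def mulLinf (φ ψ : Linf) : Linf :=
  (((Lp.memLp ψ).smul (p := ⊤) (Lp.memLp φ)) :
    MemLp ((φ : 𝕋 → ℂ) • (ψ : 𝕋 → ℂ)) ⊤ μT).toLp _

/-- The Hankel operator `H_φ = (I − P) M_φ P`, as an operator on all of `L²`. -/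
def HankFull (φ : Linf) : L2 →L[ℂ] L2 := (1 - PFull) ∘L mulCLM φ ∘L PFull

/-!
Write `S = T_z` for the shift. Since `S* T_φ S = T_φ` and `S` is an isometry, the range and the
kernel of the orthogonal projection `Q = T_φ` are both invariant under `S`, so `Q` commutes with
`S`. Then `⟪zⁿ⁺¹, Q 1⟫ = ⟪S (Q zⁿ), 1⟫ = 0`, so `Q 1 = c` is constant, `Q zⁿ = Q Sⁿ 1 = c zⁿ`,
and self-adjointness gives `Q = c̄ I`. Idempotence forces `c̄ ∈ {0, 1}`.
-/

section OrthoProj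

variable {H : Type*} [NormedAddCommGroup H] [InnerProductSpace ℂ H] [CompleteSpace H]
  {Q : H →L[ℂ] H}

theorem IsOrthoProj.apply_apply (hQ : IsOrthoProj Q) (x : H) : Q (Q x) = Q x := by
  rw [← ContinuousLinearMap.comp_apply, hQ.2]

theorem IsOrthoProj.inner_apply_self (hQ : IsOrthoProj Q) (x : H) :
    ⟪Q x, x⟫_ℂ = ⟪Q x, Q x⟫_ℂ := by
  calc ⟪Q x, x⟫_ℂ = ⟪Q (Q x), x⟫_ℂ := by rw [hQ.apply_apply]
    _ = ⟪Q x, Q x⟫_ℂ := hQ.1.isSymmetric (Q x) x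

theorem IsOrthoProj.one_sub (hQ : IsOrthoProj Q) : IsOrthoProj (1 - Q) := by
  refine ⟨(IsSelfAdjoint.one _).sub hQ.1, ?_⟩
  ext x
  simp [hQ.apply_apply]

theorem IsOrthoProj.apply_eq_zero_of_inner_eq_zero (hQ : IsOrthoProj Q) {x : H}
    (hx : ⟪Q x, x⟫_ℂ = 0) : Q x = 0 := by
  rwa [hQ.inner_apply_self, inner_self_eq_zero] at hx

theorem IsOrthoProj.apply_eq_self_of_inner_eq (hQ : IsOrthoProj Q) {x : H}
    (hx : ⟪Q x, x⟫_ℂ = ⟪x, x⟫_ℂ) : Q x = x := by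
  have h := hQ.one_sub.apply_eq_zero_of_inner_eq_zero (x := x) (by simp [hx])
  rw [sub_apply, one_apply_eq_self, sub_eq_zero] at h
  exact h.symm

theorem IsOrthoProj.commute_of_inner_map_map_eq (hQ : IsOrthoProj Q) {S : H →L[ℂ] H}
    (hS : ∀ x y, ⟪S x, S y⟫_ℂ = ⟪x, y⟫_ℂ) (hQS : ∀ x y, ⟪Q (S x), S y⟫_ℂ = ⟪Q x, y⟫_ℂ) :
    Commute Q S := by
  ext x
  have hrange : Q (S (Q x)) = S (Q x) := hQ.apply_eq_self_of_inner_eq <| by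
    rw [hQS, hS, hQ.apply_apply]
  have hker : Q (S (x - Q x)) = 0 := hQ.apply_eq_zero_of_inner_eq_zero <| by
    rw [hQS, map_sub, hQ.apply_apply, sub_self, inner_zero_left]
  rw [map_sub, map_sub, sub_eq_zero] at hker
  rw [mul_apply_eq_comp, mul_apply_eq_comp, hker, hrange]

end OrthoProj

theorem inner_eq_integral (f g : L2) :
    ⟪f, g⟫_ℂ = ∫ x, conj ((f : 𝕋 → ℂ) x) * (g : 𝕋 → ℂ) x ∂μT := by
  rw [MeasureTheory.L2.inner_def]
  exact integral_congr_ae (Filter.Eventually.of_forall fun x => mul_comm _ _)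

theorem coeFn_mulCLM (φ : Linf) (f : L2) :
    (mulCLM φ f : 𝕋 → ℂ) =ᵐ[μT] fun x => (φ : 𝕋 → ℂ) x * (f : 𝕋 → ℂ) x := by
  filter_upwards [MemLp.coeFn_toLp (memLp_mul φ f)] with x hx
  exact hx

theorem coeFn_zL : (zL : 𝕋 → ℂ) =ᵐ[μT] fun x => fourier 1 x :=
  ContinuousMap.coeFn_toLp (p := (⊤ : ℝ≥0∞)) μT (𝕜 := ℂ) (fourier 1)

theorem conj_fourier_one_mul_self (x : 𝕋) : conj (fourier 1 x) * fourier 1 x = 1 := by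
  rw [← fourier_neg, ← fourier_add, neg_add_cancel, fourier_zero]

theorem conj_fourier_mul_fourier_one (n : ℤ) (x : 𝕋) :
    conj (fourier n x) * fourier 1 x = conj (fourier (n - 1) x) := by
  rw [← fourier_neg, ← fourier_neg, ← fourier_add, neg_sub, sub_eq_neg_add]

theorem inner_fourierLp_mulCLM_zL (n : ℤ) (f : L2) :
    ⟪(fourierLp 2 n : L2), mulCLM zL f⟫_ℂ = ⟪(fourierLp 2 (n - 1) : L2), f⟫_ℂ := by
  rw [inner_eq_integral, inner_eq_integral]
  refine integral_congr_ae ?_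
  filter_upwards [coeFn_fourierLp 2 n, coeFn_fourierLp 2 (n - 1), coeFn_mulCLM zL f,
    coeFn_zL] with x h1 h2 h3 h4
  rw [h1, h2, h3, h4, ← conj_fourier_mul_fourier_one]
  ring

theorem mulCLM_zL_fourierLp (n : ℤ) :
    mulCLM zL (fourierLp 2 n : L2) = (fourierLp 2 (n + 1) : L2) := by
  refine Lp.ext ?_
  filter_upwards [coeFn_mulCLM zL (fourierLp 2 n : L2), coeFn_zL, coeFn_fourierLp 2 n,
    coeFn_fourierLp 2 (n + 1)] with x h1 h2 h3 h4
  rw [h1, h2, h3, h4, ← fourier_add, add_comm]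

theorem inner_mulCLM_zL_mulCLM_zL (f g : L2) :
    ⟪mulCLM zL f, mulCLM zL g⟫_ℂ = ⟪f, g⟫_ℂ := by
  rw [inner_eq_integral, inner_eq_integral]
  refine integral_congr_ae ?_
  filter_upwards [coeFn_mulCLM zL f, coeFn_mulCLM zL g, coeFn_zL] with x h1 h2 h3
  rw [h1, h2, h3, map_mul]
  linear_combination (conj ((f : 𝕋 → ℂ) x) * (g : 𝕋 → ℂ) x) * conj_fourier_one_mul_self x

theorem inner_mulCLM_mulCLM_zL_mulCLM_zL (φ : Linf) (f g : L2) :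
    ⟪mulCLM φ (mulCLM zL f), mulCLM zL g⟫_ℂ = ⟪mulCLM φ f, g⟫_ℂ := by
  rw [inner_eq_integral, inner_eq_integral]
  refine integral_congr_ae ?_
  filter_upwards [coeFn_mulCLM φ (mulCLM zL f), coeFn_mulCLM zL f, coeFn_mulCLM zL g,
    coeFn_mulCLM φ f, coeFn_zL] with x h1 h2 h3 h4 h5
  rw [h1, h2, h3, h4, h5, map_mul, map_mul, map_mul]
  linear_combination (conj ((φ : 𝕋 → ℂ) x) * conj ((f : 𝕋 → ℂ) x) * (g : 𝕋 → ℂ) x) *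
    conj_fourier_one_mul_self x

theorem mulCLM_zL_mem_Hardy {f : L2} (hf : f ∈ Hardy) : mulCLM zL f ∈ Hardy := by
  intro n hn
  rw [inner_fourierLp_mulCLM_zL]
  exact hf (n - 1) (by omega)

theorem inner_Toep (φ : Linf) (f g : Hardy) :
    ⟪Toep φ f, g⟫_ℂ = ⟪mulCLM φ (f : L2), (g : L2)⟫_ℂ :=
  Submodule.inner_orthogonalProjectionOnto_eq_of_mem_right g (mulCLM φ (f : L2))

theorem coe_Toep_zL (f : Hardy) : ((Toep zL f : Hardy) : L2) = mulCLM zL (f : L2) :=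
  Submodule.starProjection_eq_self_iff.mpr (mulCLM_zL_mem_Hardy f.2)

theorem inner_Toep_zL_Toep_zL (f g : Hardy) : ⟪Toep zL f, Toep zL g⟫_ℂ = ⟪f, g⟫_ℂ := by
  rw [Submodule.coe_inner, Submodule.coe_inner, coe_Toep_zL, coe_Toep_zL,
    inner_mulCLM_zL_mulCLM_zL]

theorem inner_Toep_Toep_zL_Toep_zL (φ : Linf) (f g : Hardy) :
    ⟪Toep φ (Toep zL f), Toep zL g⟫_ℂ = ⟪Toep φ f, g⟫_ℂ := by
  rw [inner_Toep, inner_Toep, coe_Toep_zL, coe_Toep_zL, inner_mulCLM_mulCLM_zL_mulCLM_zL]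

theorem inner_oneH_Toep_zL (f : Hardy) : ⟪oneH, Toep zL f⟫_ℂ = 0 := by
  rw [Submodule.coe_inner, coe_Toep_zL]
  exact (inner_fourierLp_mulCLM_zL 0 f).trans (f.2 _ (by norm_num))

theorem coe_Toep_zL_pow_oneH (n : ℕ) : ((Toep zL ^ n) oneH : L2) = fourierLp 2 (n : ℤ) := by
  induction n with
  | zero => rfl
  | succ n ih =>
    rw [pow_succ', mul_apply_eq_comp, coe_Toep_zL, ih, mulCLM_zL_fourierLp, Nat.cast_succ]

theorem eq_zero_of_forall_inner_fourierLp (v : L2)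
    (hv : ∀ n : ℤ, ⟪(fourierLp 2 n : L2), v⟫_ℂ = 0) : v = 0 := by
  have h0 : fourierBasis.repr v = 0 := by
    ext n
    rw [HilbertBasis.repr_apply_apply, coe_fourierBasis]
    simpa using hv n
  simpa using (LinearIsometryEquiv.map_eq_zero_iff fourierBasis.repr).mp h0

theorem eq_zero_of_forall_inner_Toep_zL_pow_oneH (v : Hardy)
    (hv : ∀ n : ℕ, ⟪(Toep zL ^ n) oneH, v⟫_ℂ = 0) : v = 0 := by
  refine Subtype.ext (eq_zero_of_forall_inner_fourierLp _ fun n => ?_)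
  rcases lt_or_ge n 0 with hn | hn
  · exact v.2 n hn
  · obtain ⟨m, rfl⟩ := Int.eq_ofNat_of_zero_le hn
    rw [← coe_Toep_zL_pow_oneH, ← Submodule.coe_inner]
    exact hv m

theorem inner_oneH_oneH : ⟪oneH, oneH⟫_ℂ = 1 := by
  rw [Submodule.coe_inner, show ((oneH : Hardy) : L2) = fourierLp 2 0 from rfl,
    orthonormal_iff_ite.mp orthonormal_fourier, if_pos rfl]

theorem exists_eq_smul_one_of_commute_Toep_zL {Q : Hardy →L[ℂ] Hardy} (hQ : IsSelfAdjoint Q)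
    (hcomm : Commute Q (Toep zL)) : ∃ c : ℂ, Q = c • 1 := by
  have hsymm : ∀ f g, ⟪Q f, g⟫_ℂ = ⟪f, Q g⟫_ℂ := hQ.isSymmetric
  have hperp : ∀ (n : ℕ) f, ⟪(Toep zL ^ (n + 1)) f, oneH⟫_ℂ = 0 := fun n f => by
    rw [pow_succ', mul_apply_eq_comp, ← inner_conj_symm (E := Hardy), inner_oneH_Toep_zL, map_zero]
  have hcomm_pow : ∀ (n : ℕ) f, Q ((Toep zL ^ n) f) = (Toep zL ^ n) (Q f) := fun n f => by
    rw [← mul_apply_eq_comp, (hcomm.pow_right n).eq, mul_apply_eq_comp]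
  set c := ⟪oneH, Q oneH⟫_ℂ
  have hQ_one : Q oneH = c • oneH := by
    rw [← sub_eq_zero]
    refine eq_zero_of_forall_inner_Toep_zL_pow_oneH _ fun n => ?_
    rw [inner_sub_right, inner_smul_right (E := Hardy)]
    cases n with
    | zero => rw [pow_zero, one_apply_eq_self, inner_oneH_oneH, mul_one, sub_self]
    | succ n => rw [← hsymm, hcomm_pow, hperp, hperp, mul_zero, sub_zero]
  refine ⟨conj c, ContinuousLinearMap.ext fun f => ?_⟩
  rw [smul_apply, one_apply_eq_self, ← sub_eq_zero]
  refine eq_zero_of_forall_inner_Toep_zL_pow_oneH _ fun n => ?_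
  rw [inner_sub_right, inner_smul_right (E := Hardy), ← hsymm, hcomm_pow, hQ_one, map_smul,
    inner_smul_left (E := Hardy), sub_self]

/-- A Toeplitz operator which is an orthogonal projection is `0` or the identity. -/
theorem toeplitz_projection_trivial (φ : Linf) (h : IsOrthoProj (Toep φ)) :
    Toep φ = 0 ∨ Toep φ = 1 := by
  have hcomm : Commute (Toep φ) (Toep zL) :=
    h.commute_of_inner_map_map_eq inner_Toep_zL_Toep_zL (inner_Toep_Toep_zL_Toep_zL φ)
  obtain ⟨c, hc⟩ := exists_eq_smul_one_of_commute_Toep_zL h.1 hcomm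
  have hc_idem : IsIdempotentElem c := by
    have hone : oneH ≠ 0 := fun h0 => by simpa [h0] using inner_oneH_oneH
    have hidem_one := congr($(h.2) oneH)
    simp only [hc, ContinuousLinearMap.comp_apply, smul_apply, one_apply_eq_self, smul_smul]
      at hidem_one
    exact smul_left_injective ℂ hone hidem_one
  rcases IsIdempotentElem.iff_eq_zero_or_one.mp hc_idem with hc0 | hc1
  · exact Or.inl (by rw [hc, hc0]; exact zero_smul ℂ (1 : Hardy →L[ℂ] Hardy))
  · exact Or.inr (by rw [hc, hc1]; exact one_smul ℂ (1 : Hardy →L[ℂ] Hardy))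

end ToeplitzProj
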